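/- arXiv:2304.09672 — 2 statements merged into one kernel-verified Lean document; each statement's English description precedes it below -/
import Mathlib

section
/- Let s ≥ 1 be an integer, c_1 < … < c_s be s distinct real numbers, and (A, b) the coefficients of the associated Runge–Kutta collocation method with linear stability function R(λ) = 1 + λ bᵀ (I − λA)^{-1} 𝟙. Then for every λ ∈ ℂ with Re(λ) > 0 such that I − λA is invertible and ∫_0^{+∞} e^{−λσ} π(σ) dσ ≠ 0, one has R(λ) = (∫_0^{+∞} e^{−λσ} π(σ+1) dσ) / (∫_0^{+∞} e^{−λσ} π(σ) dσ). -/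
open Polynomial Matrix MeasureTheory

noncomputable section

/-- Lagrange basis function `ℓ_i(t) = ∏_{j≠i} (t - c_j)/(c_i - c_j)`. -/
def lagrangeFun (s : ℕ) (c : Fin s → ℝ) (i : Fin s) (t : ℝ) : ℝ :=
  ∏ j ∈ Finset.univ.erase i, (t - c j) / (c i - c j)

/-- Coefficient matrix `A` of the collocation method: `a_{ij} = ∫_0^{c_i} ℓ_j`. -/
def collocA (s : ℕ) (c : Fin s → ℝ) : Matrix (Fin s) (Fin s) ℝ :=
  Matrix.of fun i j => ∫ t in (0:ℝ)..(c i), lagrangeFun s c j t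

/-- Weight vector `b` of the collocation method: `b_i = ∫_0^1 ℓ_i`. -/
def collocB (s : ℕ) (c : Fin s → ℝ) : Fin s → ℝ :=
  fun i => ∫ t in (0:ℝ)..(1:ℝ), lagrangeFun s c i t

/-- `π = ∏ (X - c_i)`. -/
def piPoly (s : ℕ) (c : Fin s → ℝ) : Polynomial ℝ :=
  ∏ i : Fin s, (Polynomial.X - Polynomial.C (c i))

/-- The linear map `τ` sending `Σ a_k X^k` to `Σ k! a_k X^k`. -/
def tauP (p : Polynomial ℝ) : Polynomial ℝ :=
  ∑ k ∈ p.support, Polynomial.C ((k.factorial : ℝ) * p.coeff k) * Polynomial.X ^ k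

/-- The matrix `A` viewed as a complex matrix. -/
def collocAC (s : ℕ) (c : Fin s → ℝ) : Matrix (Fin s) (Fin s) ℂ :=
  (collocA s c).map (fun x => (x : ℂ))

/-- The weight vector `b` viewed as a complex vector. -/
def collocBC (s : ℕ) (c : Fin s → ℝ) : Fin s → ℂ :=
  fun i => (collocB s c i : ℂ)

/-- The linear stability function `R(λ) = 1 + λ bᵀ (I - λ A)⁻¹ 𝟙`. -/
def stabR (s : ℕ) (c : Fin s → ℝ) (lam : ℂ) : ℂ :=
  1 + lam * (collocBC s c ⬝ᵥ ((1 - lam • collocAC s c)⁻¹ *ᵥ (fun _ => 1)))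

/-- A-stability: `|R(λ)| ≤ 1` on the closed left half-plane (where defined). -/
def AStable (s : ℕ) (c : Fin s → ℝ) : Prop :=
  ∀ lam : ℂ, lam.re ≤ 0 → IsUnit (1 - lam • collocAC s c).det →
    ‖stabR s c lam‖ ≤ 1

/-- I-stability: `|R(λ)| ≤ 1` on the imaginary axis (where defined). -/
def IStable (s : ℕ) (c : Fin s → ℝ) : Prop :=
  ∀ lam : ℂ, lam.re = 0 → IsUnit (1 - lam • collocAC s c).det →
    ‖stabR s c lam‖ ≤ 1

/-- AS-stability: `I - λA` invertible on `ℂ⁻` and `λ bᵀ (I - λA)⁻¹` uniformly bounded there. -/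
def ASStable (s : ℕ) (c : Fin s → ℝ) : Prop :=
  (∀ lam : ℂ, lam.re ≤ 0 → IsUnit (1 - lam • collocAC s c).det) ∧
  ∃ M : ℝ, ∀ lam : ℂ, lam.re ≤ 0 → ∀ j,
    ‖lam * (collocBC s c ᵥ* (1 - lam • collocAC s c)⁻¹) j‖ ≤ M

/-- ASI-stability: `I - λA` invertible on `ℂ⁻` and `(I - λA)⁻¹` uniformly bounded there. -/
def ASIStable (s : ℕ) (c : Fin s → ℝ) : Prop :=
  (∀ lam : ℂ, lam.re ≤ 0 → IsUnit (1 - lam • collocAC s c).det) ∧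
  ∃ M : ℝ, ∀ lam : ℂ, lam.re ≤ 0 → ∀ i j,
    ‖(1 - lam • collocAC s c)⁻¹ i j‖ ≤ M

/-- IS-stability: `I - λA` invertible on `iℝ` and `λ bᵀ (I - λA)⁻¹` uniformly bounded there. -/
def ISStable (s : ℕ) (c : Fin s → ℝ) : Prop :=
  (∀ lam : ℂ, lam.re = 0 → IsUnit (1 - lam • collocAC s c).det) ∧
  ∃ M : ℝ, ∀ lam : ℂ, lam.re = 0 → ∀ j,
    ‖lam * (collocBC s c ᵥ* (1 - lam • collocAC s c)⁻¹) j‖ ≤ M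

/-- ISI-stability: `I - λA` invertible on `iℝ` and `(I - λA)⁻¹` uniformly bounded there. -/
def ISIStable (s : ℕ) (c : Fin s → ℝ) : Prop :=
  (∀ lam : ℂ, lam.re = 0 → IsUnit (1 - lam • collocAC s c).det) ∧
  ∃ M : ℝ, ∀ lam : ℂ, lam.re = 0 → ∀ i j,
    ‖(1 - lam • collocAC s c)⁻¹ i j‖ ≤ M

end

/-
Put `Q = Σₖ π⁽ᵏ⁾ / λ^(k+1)`. Then `Q' = λQ - π`, so `σ ↦ -e^{-λσ} Q(σ + t)` is an antiderivative of
`σ ↦ e^{-λσ} π(σ + t)`, and for `Re λ > 0` the Laplace transform of `π(· + t)` is `Q(t)`; in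
particular `Q' = λQ` at the nodes. Since `deg Q' < s`, the quadratures defining `A` and `b` are
exact for `Q'`: `Σⱼ aᵢⱼ Q'(cⱼ) = Q(cᵢ) - Q(0)` and `Σⱼ bⱼ Q'(cⱼ) = Q(1) - Q(0)`. Hence
`g = (Q(cᵢ) / Q(0))ᵢ` solves `(I - λA) g = 𝟙`, and `R(λ) = 1 + λ bᵀ g = Q(1) / Q(0)`.
-/

open Set Filter Topology

noncomputable def laplacePoly (lam : ℂ) (p : ℂ[X]) : ℂ[X] :=
  ∑ k ∈ Finset.range (p.natDegree + 1), (lam ^ (k + 1))⁻¹ • derivative^[k] p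

section Laplace

variable {lam : ℂ}

lemma norm_cexp_neg_mul_mul_pow {x : ℝ} (hx : 0 ≤ x) (k : ℕ) :
    ‖Complex.exp (-lam * x) * (x : ℂ) ^ k‖ = x ^ k * Real.exp (-lam.re * x) := by
  rw [norm_mul, Complex.norm_exp, norm_pow, Complex.norm_real, Real.norm_of_nonneg hx, mul_comm]
  simp

lemma integrableOn_cexp_neg_mul_mul_pow (hre : 0 < lam.re) (k : ℕ) :
    IntegrableOn (fun x : ℝ => Complex.exp (-lam * x) * (x : ℂ) ^ k) (Ioi 0) := by
  have hbound :
      IntegrableOn (fun x : ℝ => x ^ (k : ℝ) * Real.exp (-lam.re * x ^ (1 : ℝ))) (Ioi 0) :=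
    integrableOn_rpow_mul_exp_neg_mul_rpow (by linarith [k.cast_nonneg (α := ℝ)]) one_pos hre
  refine Integrable.mono' hbound (by fun_prop) ?_
  filter_upwards [ae_restrict_mem measurableSet_Ioi] with x hx
  simp only [norm_cexp_neg_mul_mul_pow (le_of_lt hx), Real.rpow_natCast, Real.rpow_one, le_refl]

lemma tendsto_cexp_neg_mul_mul_pow_atTop (hre : 0 < lam.re) (k : ℕ) :
    Tendsto (fun x : ℝ => Complex.exp (-lam * x) * (x : ℂ) ^ k) atTop (𝓝 0) := by
  rw [tendsto_zero_iff_norm_tendsto_zero]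
  refine (tendsto_rpow_mul_exp_neg_mul_atTop_nhds_zero k lam.re hre).congr' ?_
  filter_upwards [eventually_ge_atTop 0] with x hx
  simp only [norm_cexp_neg_mul_mul_pow hx, Real.rpow_natCast]

lemma cexp_neg_mul_mul_eval_eq_sum (p : ℂ[X]) (x : ℝ) :
    Complex.exp (-lam * x) * p.eval (x : ℂ) =
      ∑ k ∈ Finset.range (p.natDegree + 1), p.coeff k * (Complex.exp (-lam * x) * (x : ℂ) ^ k) := by
  rw [eval_eq_sum_range, Finset.mul_sum]
  exact Finset.sum_congr rfl fun k _ => by ring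

lemma integrableOn_cexp_neg_mul_mul_eval (hre : 0 < lam.re) (p : ℂ[X]) :
    IntegrableOn (fun x : ℝ => Complex.exp (-lam * x) * p.eval (x : ℂ)) (Ioi 0) := by
  simp_rw [cexp_neg_mul_mul_eval_eq_sum]
  exact integrable_finsetSum _ fun k _ => (integrableOn_cexp_neg_mul_mul_pow hre k).const_mul _

lemma tendsto_cexp_neg_mul_mul_eval_atTop (hre : 0 < lam.re) (p : ℂ[X]) :
    Tendsto (fun x : ℝ => Complex.exp (-lam * x) * p.eval (x : ℂ)) atTop (𝓝 0) := by
  simp_rw [cexp_neg_mul_mul_eval_eq_sum]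
  simpa using tendsto_finsetSum _ fun k _ =>
    (tendsto_cexp_neg_mul_mul_pow_atTop hre k).const_mul (p.coeff k)

lemma natDegree_laplacePoly_le (p : ℂ[X]) :
    (laplacePoly lam p).natDegree ≤ p.natDegree :=
  natDegree_sum_le_of_forall_le _ _ fun k _ =>
    (natDegree_smul_le _ _).trans <| (natDegree_iterate_derivative p k).trans tsub_le_self

lemma derivative_laplacePoly (hlam : lam ≠ 0) (p : ℂ[X]) :
    derivative (laplacePoly lam p) = lam • laplacePoly lam p - p := by
  have hshift : ∀ k : ℕ, lam • (lam ^ (k + 1 + 1))⁻¹ • derivative^[k + 1] p =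
      (lam ^ (k + 1))⁻¹ • derivative^[k + 1] p := fun k => by
    rw [smul_smul, pow_succ _ (k + 1), mul_inv, mul_left_comm, mul_inv_cancel₀ hlam, mul_one]
  rw [laplacePoly, derivative_sum, Finset.smul_sum, Finset.sum_range_succ,
    Finset.sum_range_succ' _ p.natDegree]
  simp_rw [derivative_smul, ← Function.iterate_succ_apply' derivative, hshift,
    iterate_derivative_eq_zero (Nat.lt_succ_self _)]
  simp [smul_smul, mul_inv_cancel₀ hlam]

lemma integral_cexp_neg_mul_mul_eval_add (hre : 0 < lam.re) (p : ℂ[X]) (t : ℂ) :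
    ∫ σ in Ioi (0 : ℝ), Complex.exp (-lam * σ) * p.eval (σ + t) = (laplacePoly lam p).eval t := by
  have hlam : lam ≠ 0 := fun h => by simp [h] at hre
  set Q := laplacePoly lam p
  have hderiv : ∀ σ : ℝ, HasDerivAt (fun σ : ℝ => -(Complex.exp (-lam * σ) * Q.eval (σ + t)))
      (Complex.exp (-lam * σ) * p.eval (σ + t)) σ := by
    intro σ
    have hexp : HasDerivAt (fun σ : ℂ => Complex.exp (-lam * σ))
        (Complex.exp (-lam * σ) * -lam) σ := by
      simpa using ((hasDerivAt_id (σ : ℂ)).const_mul (-lam)).cexp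
    have hQ : HasDerivAt (fun σ : ℂ => Q.eval (σ + t)) ((derivative Q).eval (σ + t)) σ :=
      (Q.hasDerivAt ((σ : ℂ) + t)).comp_add_const (σ : ℂ) t
    refine ((hexp.mul hQ).comp_ofReal).neg.congr_deriv ?_
    rw [derivative_laplacePoly hlam, eval_sub, eval_smul, smul_eq_mul]
    ring
  simp_rw [← taylor_eval] at hderiv ⊢
  rw [integral_Ioi_of_hasDerivAt_of_tendsto' (fun σ _ => hderiv σ) (m := 0)
    (integrableOn_cexp_neg_mul_mul_eval hre _)
    (by simpa using (tendsto_cexp_neg_mul_mul_eval_atTop hre (taylor t Q)).neg)]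
  simp [taylor_eval]

end Laplace

lemma continuous_lagrangeFun (s : ℕ) (c : Fin s → ℝ) (j : Fin s) :
    Continuous (lagrangeFun s c j) := by
  unfold lagrangeFun
  fun_prop

section Quadrature

variable {s : ℕ} {c : Fin s → ℝ}

lemma ofReal_lagrangeFun (j : Fin s) (t : ℝ) :
    (lagrangeFun s c j t : ℂ) =
      (Lagrange.basis Finset.univ (fun i => (c i : ℂ)) j).eval (t : ℂ) := by
  rw [lagrangeFun, Lagrange.basis, eval_prod, Complex.ofReal_prod]
  refine Finset.prod_congr rfl fun k _ => ?_
  simp [Lagrange.basisDivisor, div_eq_inv_mul]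

lemma eval_ofReal_eq_sum_lagrangeFun (hc : Function.Injective c) {p : ℂ[X]}
    (hp : p.degree < s) (t : ℝ) :
    p.eval (t : ℂ) = ∑ j, (lagrangeFun s c j t : ℂ) * p.eval (c j : ℂ) := by
  have hinj : Set.InjOn (fun i => (c i : ℂ)) (Finset.univ : Finset (Fin s)) :=
    fun i _ j _ h => hc (Complex.ofReal_injective h)
  conv_lhs => rw [Lagrange.eq_interpolate (f := p) hinj (by simpa using hp),
    Lagrange.interpolate_apply]
  simp [eval_finsetSum, ofReal_lagrangeFun, mul_comm]

lemma sum_integral_lagrangeFun_mul_eval (hc : Function.Injective c) {p : ℂ[X]}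
    (hp : p.degree < s) (a b : ℝ) :
    ∑ j, ((∫ t in a..b, lagrangeFun s c j t : ℝ) : ℂ) * p.eval (c j : ℂ) =
      ∫ t in a..b, p.eval (t : ℂ) := by
  rw [intervalIntegral.integral_congr fun t _ => eval_ofReal_eq_sum_lagrangeFun hc hp t,
    intervalIntegral.integral_finsetSum fun j _ => Continuous.intervalIntegrable
    (by have := continuous_lagrangeFun s c j; fun_prop) a b]
  simp [intervalIntegral.integral_mul_const, intervalIntegral.integral_ofReal]

lemma integral_eval_derivative_ofReal (p : ℂ[X]) (a b : ℝ) :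
    ∫ t in a..b, (derivative p).eval (t : ℂ) = p.eval (b : ℂ) - p.eval (a : ℂ) := by
  refine intervalIntegral.integral_eq_sub_of_hasDerivAt
    (fun t _ => (p.hasDerivAt (t : ℂ)).comp_ofReal) (Continuous.intervalIntegrable ?_ a b)
  fun_prop

lemma sum_integral_lagrangeFun_mul_eval_derivative (hc : Function.Injective c) {Q : ℂ[X]}
    (hQ : Q.natDegree ≤ s) (a b : ℝ) :
    ∑ j, ((∫ t in a..b, lagrangeFun s c j t : ℝ) : ℂ) * (derivative Q).eval (c j : ℂ) =
      Q.eval (b : ℂ) - Q.eval (a : ℂ) := by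
  have hdeg : (derivative Q).degree < s := by
    rcases eq_or_ne Q 0 with rfl | hQ0
    · simp
    · exact (degree_derivative_lt hQ0).trans_le (degree_le_of_natDegree_le hQ)
  rw [sum_integral_lagrangeFun_mul_eval hc hdeg, integral_eval_derivative_ofReal]

end Quadrature

section Collocation

variable {s : ℕ} {c : Fin s → ℝ}

lemma collocAC_mulVec_eval_derivative (hc : Function.Injective c) {Q : ℂ[X]}
    (hQ : Q.natDegree ≤ s) :
    collocAC s c *ᵥ (fun j => (derivative Q).eval (c j : ℂ)) =
      fun i => Q.eval (c i : ℂ) - Q.eval 0 := by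
  funext i
  simpa [collocAC, collocA, mulVec, dotProduct] using
    sum_integral_lagrangeFun_mul_eval_derivative hc hQ 0 (c i)

lemma collocBC_dotProduct_eval_derivative (hc : Function.Injective c) {Q : ℂ[X]}
    (hQ : Q.natDegree ≤ s) :
    collocBC s c ⬝ᵥ (fun j => (derivative Q).eval (c j : ℂ)) = Q.eval 1 - Q.eval 0 := by
  simpa [collocBC, collocB, dotProduct] using
    sum_integral_lagrangeFun_mul_eval_derivative hc hQ 0 1

lemma stabR_eq_eval_one_div_eval_zero (hc : Function.Injective c) {lam : ℂ}
    (hinv : IsUnit (1 - lam • collocAC s c).det) {Q : ℂ[X]} (hQ : Q.natDegree ≤ s)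
    (hQ' : ∀ j, (derivative Q).eval (c j : ℂ) = lam * Q.eval (c j : ℂ)) (hQ0 : Q.eval 0 ≠ 0) :
    stabR s c lam = Q.eval 1 / Q.eval 0 := by
  set q : Fin s → ℂ := fun j => Q.eval (c j : ℂ)
  have hq' : (fun j => (derivative Q).eval (c j : ℂ)) = lam • q := funext hQ'
  have hsolve : (1 - lam • collocAC s c) *ᵥ q = Q.eval 0 • fun _ => 1 := by
    rw [sub_mulVec, one_mulVec, smul_mulVec, ← mulVec_smul, ← hq',
      collocAC_mulVec_eval_derivative hc hQ]
    funext i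
    simp [q]
  have hstage : (1 - lam • collocAC s c)⁻¹ *ᵥ (fun _ => 1) = (Q.eval 0)⁻¹ • q := by
    have hone : (fun _ => (1 : ℂ)) = (Q.eval 0)⁻¹ • ((1 - lam • collocAC s c) *ᵥ q) := by
      rw [hsolve, smul_smul, inv_mul_cancel₀ hQ0, one_smul]
    rw [hone, mulVec_smul, mulVec_mulVec, nonsing_inv_mul _ hinv, one_mulVec]
  rw [stabR, hstage, dotProduct_smul, smul_eq_mul, mul_left_comm, ← smul_eq_mul lam,
    ← dotProduct_smul, ← hq', collocBC_dotProduct_eval_derivative hc hQ]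
  field_simp
  ring

end Collocation

lemma natDegree_piPoly (s : ℕ) (c : Fin s → ℝ) : (piPoly s c).natDegree = s := by
  rw [piPoly, natDegree_prod_of_monic _ _ fun i _ => monic_X_sub_C (c i)]
  simp

lemma eval_piPoly_self {s : ℕ} (c : Fin s → ℝ) (j : Fin s) : (piPoly s c).eval (c j) = 0 := by
  rw [piPoly, eval_prod]
  exact Finset.prod_eq_zero (Finset.mem_univ j) (by simp)

theorem stabR_eq_laplace_ratio_general (s : ℕ) (c : Fin s → ℝ) (hc : StrictMono c)
    (lam : ℂ) (hre : 0 < lam.re)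
    (hinv : IsUnit (1 - lam • collocAC s c).det)
    (hden : (∫ σ in Set.Ioi (0:ℝ), Complex.exp (-lam * σ) * (((piPoly s c).eval σ : ℝ) : ℂ)) ≠ 0) :
    stabR s c lam =
      (∫ σ in Set.Ioi (0:ℝ), Complex.exp (-lam * σ) * (((piPoly s c).eval (σ + 1) : ℝ) : ℂ)) /
      (∫ σ in Set.Ioi (0:ℝ), Complex.exp (-lam * σ) * (((piPoly s c).eval σ : ℝ) : ℂ)) := by
  have hlam : lam ≠ 0 := fun h => by simp [h] at hre
  set P := (piPoly s c).map Complex.ofRealHom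
  have hP : ∀ x : ℝ, (((piPoly s c).eval x : ℝ) : ℂ) = P.eval (x : ℂ) := fun x =>
    (eval_map_apply Complex.ofRealHom x).symm
  set Q := laplacePoly lam P
  have hlaplace : ∀ t : ℝ, ∫ σ in Ioi (0 : ℝ), Complex.exp (-lam * σ) *
      (((piPoly s c).eval (σ + t) : ℝ) : ℂ) = Q.eval (t : ℂ) := fun t => by
    simp_rw [hP, Complex.ofReal_add]
    exact integral_cexp_neg_mul_mul_eval_add hre P t
  have hnum := hlaplace 1
  have hden0 := hlaplace 0
  simp only [add_zero, Complex.ofReal_one, Complex.ofReal_zero] at hnum hden0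
  rw [hden0] at hden ⊢
  rw [hnum]
  refine stabR_eq_eval_one_div_eval_zero hc.injective hinv ?_ (fun j => ?_) hden
  · calc Q.natDegree ≤ P.natDegree := natDegree_laplacePoly_le P
      _ ≤ s := natDegree_map_le.trans (natDegree_piPoly s c).le
  · rw [derivative_laplacePoly hlam, eval_sub, eval_smul, smul_eq_mul, ← hP, eval_piPoly_self,
      Complex.ofReal_zero, sub_zero]

/-- Laplace representation of the stability function:
`R(λ) = (∫_0^∞ e^{-λσ} π(σ+1) dσ) / (∫_0^∞ e^{-λσ} π(σ) dσ)` for `Re λ > 0`. -/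
theorem stabR_eq_laplace_ratio (s : ℕ) (hs : 1 ≤ s) (c : Fin s → ℝ) (hc : StrictMono c)
    (lam : ℂ) (hre : 0 < lam.re)
    (hinv : IsUnit (1 - lam • collocAC s c).det)
    (hden : (∫ σ in Set.Ioi (0:ℝ), Complex.exp (-lam * σ) * (((piPoly s c).eval σ : ℝ) : ℂ)) ≠ 0) :
    stabR s c lam =
      (∫ σ in Set.Ioi (0:ℝ), Complex.exp (-lam * σ) * (((piPoly s c).eval (σ + 1) : ℝ) : ℂ)) /
      (∫ σ in Set.Ioi (0:ℝ), Complex.exp (-lam * σ) * (((piPoly s c).eval σ : ℝ) : ℂ)) :=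
  stabR_eq_laplace_ratio_general s c hc lam hre hinv hden
end

section
/- Let s ≥ 1 be an integer and c_1 < … < c_s be s distinct real numbers that are symmetric with respect to 1/2, i.e. c_i + c_{s+1−i} = 1 for all i ∈ {1, …, s}. Let π = ∏_{i=1}^s (X − c_i). Then τ(π(X+1))(λ) = (−1)^s · τ(π(X))(−λ) for all λ ∈ ℂ, where π(X+1) denotes π composed with X+1 and τ is the linear map on polynomials of degree at most s sending Σ_k a_k X^k to Σ_k k! a_k X^k. -/
open Polynomial Matrix MeasureTheory

/-! Symmetry of the nodes gives `π(X + 1) = (-1)^s π(-X)`, and since `τ` acts diagonally on the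
monomial basis, it commutes with scalars and with `X ↦ -X`. -/

open Polynomial Nat

lemma coeff_tauP (p : ℝ[X]) (k : ℕ) : (tauP p).coeff k = k ! * p.coeff k := by
  rw [tauP, finsetSum_coeff, Finset.sum_eq_single k]
  · rw [coeff_C_mul_X_pow, if_pos rfl]
  · intro j _ hjk
    rw [coeff_C_mul_X_pow, if_neg hjk.symm]
  · intro hk
    simp [notMem_support_iff.mp hk]

lemma tauP_C_mul (a : ℝ) (p : ℝ[X]) : tauP (C a * p) = C a * tauP p := by
  ext k
  simp only [coeff_tauP, coeff_C_mul]
  ring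

lemma tauP_comp_neg_X (p : ℝ[X]) : tauP (p.comp (-X)) = (tauP p).comp (-X) := by
  have hX : (-X : ℝ[X]) = C (-1) * X := by simp
  ext k
  simp only [hX, comp_C_mul_X_coeff, coeff_tauP]
  ring

lemma aeval_comp_neg_X {A : Type*} [CommRing A] [Algebra ℝ A] (p : ℝ[X]) (x : A) :
    aeval x (p.comp (-X)) = aeval (-x) p := by
  simp [aeval_comp]

lemma piPoly_comp_X_add_one {s : ℕ} (c : Fin s → ℝ) (hsym : ∀ i : Fin s, c i + c i.rev = 1) :
    (piPoly s c).comp (X + 1) = C ((-1) ^ s) * (piPoly s c).comp (-X) := by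
  have factor (i : Fin s) :
      (X - C (c i)).comp (X + 1) = C (-1) * (X - C (c i.rev)).comp (-X) := by
    have hrev : c i.rev = 1 - c i := by linarith [hsym i]
    simp only [sub_comp, X_comp, C_comp, one_comp, hrev, C_sub, C_1, C_neg]
    ring
  rw [piPoly, prod_comp, prod_comp, Finset.prod_congr rfl fun i _ => factor i,
    Finset.prod_mul_distrib, Finset.prod_const, Finset.card_univ, Fintype.card_fin, ← C_pow]
  congr 1
  exact Fintype.prod_equiv Fin.revPerm _ _ fun i => by simp

theorem tau_symmetry_general (s : ℕ) (c : Fin s → ℝ)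
    (hsym : ∀ i : Fin s, c i + c i.rev = 1) :
    ∀ lam : ℂ,
      Polynomial.aeval lam (tauP ((piPoly s c).comp (Polynomial.X + 1))) =
        (-1) ^ s * Polynomial.aeval (-lam) (tauP (piPoly s c)) := by
  intro lam
  rw [piPoly_comp_X_add_one c hsym, tauP_C_mul, tauP_comp_neg_X, map_mul, aeval_C,
    aeval_comp_neg_X]
  simp

/-- for collocation points symmetric with respect to `1/2` one has
`τ(π(X+1))(λ) = (-1)^s τ(π(X))(-λ)`. -/
theorem tau_symmetry (s : ℕ) (hs : 1 ≤ s) (c : Fin s → ℝ) (hc : StrictMono c)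
    (hsym : ∀ i : Fin s, c i + c i.rev = 1) :
    ∀ lam : ℂ,
      Polynomial.aeval lam (tauP ((piPoly s c).comp (Polynomial.X + 1))) =
        (-1) ^ s * Polynomial.aeval (-lam) (tauP (piPoly s c)) :=
  tau_symmetry_general s c hsym
end
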